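/- arXiv:1812.01648 — 7 statements merged into one kernel-verified Lean document; each statement's English description precedes it below -/
import Mathlib

section
/- If a nonempty convex set C ⊆ ℝ^h is hyperbolic, i.e., C ⊆ μ𝔹 + 0⁺C for some μ ≥ 0 (where 𝔹 is the closed unit ball), then the polar set of C contains μ⁻¹𝔹 ∩ C^b, where C^b is the barrier cone of C. -/
/-! A functional bounded above on `C` is nonpositive on every recession direction of `C`, since
it would otherwise grow without bound along the ray `x + t • y ⊆ C`. Writing `x ∈ C` as `b + y`
with `‖b‖ ≤ μ` and `y ∈ 0⁺C`, a `q ∈ C^b` with `‖q‖ ≤ μ⁻¹` therefore satisfies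
`⟪q, x⟫ ≤ ⟪q, b⟫ ≤ ‖q‖ ‖b‖ ≤ μ⁻¹ μ ≤ 1`. -/

open RealInnerProductSpace Pointwise

/-- The recession cone `0⁺C` of a set `C`. -/
def recCone {h : ℕ} (C : Set (EuclideanSpace ℝ (Fin h))) : Set (EuclideanSpace ℝ (Fin h)) :=
  {y | ∀ x ∈ C, ∀ μ : ℝ, 0 ≤ μ → x + μ • y ∈ C}

/-- The barrier cone `C^b = {q | sup_{x ∈ C} ⟨q,x⟩ < +∞}`. -/
def barrierCone {h : ℕ} (C : Set (EuclideanSpace ℝ (Fin h))) : Set (EuclideanSpace ℝ (Fin h)) :=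
  {q | BddAbove ((fun x => ⟪q, x⟫) '' C)}

/-- The polar set `C° = {q | ⟨q,x⟩ ≤ 1 for all x ∈ C}`. -/
def polarSet {h : ℕ} (C : Set (EuclideanSpace ℝ (Fin h))) : Set (EuclideanSpace ℝ (Fin h)) :=
  {q | ∀ x ∈ C, ⟪q, x⟫ ≤ 1}

theorem inner_nonpos_of_mem_barrierCone_of_mem_recCone {h : ℕ}
    {C : Set (EuclideanSpace ℝ (Fin h))} {q x y : EuclideanSpace ℝ (Fin h)}
    (hq : q ∈ barrierCone C) (hx : x ∈ C) (hy : y ∈ recCone C) : ⟪q, y⟫ ≤ 0 := by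
  obtain ⟨M, hM⟩ := hq
  by_contra! hpos
  obtain ⟨n, hn⟩ := exists_nat_gt ((M - ⟪q, x⟫) / ⟪q, y⟫)
  have hray : ⟪q, x + (n : ℝ) • y⟫ ≤ M := hM ⟨_, hy x hx n n.cast_nonneg, rfl⟩
  rw [div_lt_iff₀ hpos] at hn
  rw [inner_add_right, real_inner_smul_right] at hray
  linarith

theorem inner_le_one_of_norm_le_inv_of_norm_le {E : Type*} [NormedAddCommGroup E]
    [InnerProductSpace ℝ E] {q b : E} {μ : ℝ} (hq : ‖q‖ ≤ μ⁻¹) (hb : ‖b‖ ≤ μ) :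
    ⟪q, b⟫ ≤ 1 :=
  calc ⟪q, b⟫ ≤ ‖q‖ * ‖b‖ := real_inner_le_norm q b
    _ ≤ μ⁻¹ * μ := mul_le_mul hq hb (norm_nonneg b) ((norm_nonneg q).trans hq)
    _ ≤ 1 := inv_mul_le_one

theorem stmt2_general {h : ℕ} (C : Set (EuclideanSpace ℝ (Fin h)))
    (μ : ℝ)
    (hhyp : C ⊆ Metric.closedBall (0 : EuclideanSpace ℝ (Fin h)) μ + recCone C) :
    Metric.closedBall (0 : EuclideanSpace ℝ (Fin h)) μ⁻¹ ∩ barrierCone C ⊆ polarSet C := by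
  rintro q ⟨hq_ball, hq_barrier⟩ x hx
  obtain ⟨b, hb, y, hy, rfl⟩ := hhyp hx
  have hb_le : ⟪q, b⟫ ≤ 1 :=
    inner_le_one_of_norm_le_inv_of_norm_le (mem_closedBall_zero_iff.mp hq_ball)
      (mem_closedBall_zero_iff.mp hb)
  have hy_nonpos : ⟪q, y⟫ ≤ 0 := inner_nonpos_of_mem_barrierCone_of_mem_recCone hq_barrier hx hy
  rw [inner_add_right]
  linarith

/-- If a nonempty convex `C` is hyperbolic, i.e. `C ⊆ μ𝔹 + 0⁺C` with `μ ≥ 0`, then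
`C° ⊇ μ⁻¹𝔹 ∩ C^b`. -/
theorem stmt2 {h : ℕ} (C : Set (EuclideanSpace ℝ (Fin h)))
    (hne : C.Nonempty) (hconv : Convex ℝ C) (μ : ℝ) (hμ : 0 ≤ μ)
    (hhyp : C ⊆ Metric.closedBall (0 : EuclideanSpace ℝ (Fin h)) μ + recCone C) :
    Metric.closedBall (0 : EuclideanSpace ℝ (Fin h)) μ⁻¹ ∩ barrierCone C ⊆ polarSet C :=
  stmt2_general C μ hhyp
end

section
/- Let H: ℝ^r ⇉ ℝ^r be a strict convex process (a set-valued map whose graph is a convex cone, with H(x) ≠ ∅ for all x). Then H is weakly asymptotically stable if and only if ⋃_{ℓ≥1} H^{-ℓ}(𝔹) = ℝ^r, where 𝔹 is the closed unit ball. -/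
/-- `ℓ`-fold iterate of a set-valued map: `SIter F ℓ x = F^ℓ(x)`. -/
def SIter {E : Type*} (F : E → Set E) : ℕ → E → Set E
  | 0, x => {x}
  | n + 1, x => ⋃ y ∈ SIter F n x, F y

/-- `H` is weakly asymptotically stable: from every initial state there is a solution of
`x_{k+1} ∈ H(x_k)` converging to `0`. -/
def WeaklyAsympStable {E : Type*} [Zero E] [TopologicalSpace E] (H : E → Set E) : Prop :=
  ∀ x : E, ∃ f : ℕ → E, f 0 = x ∧ (∀ k, f (k + 1) ∈ H (f k)) ∧
    Filter.Tendsto f Filter.atTop (nhds 0)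

/-!
The forward direction is immediate: a trajectory converging to `0` eventually enters the unit
ball. Conversely, as the graph of `H` is a convex cone, trajectories of `H` can be added and
scaled by nonnegative reals. The starts of trajectories of a fixed length that stay `ε`-small form
a convex absorbent set, hence (in finite dimension) a neighbourhood of `0`; so a trajectory from
`x` can be followed, up to an error `ε`, from every point near `x`. Compactness of the unit ball
then yields one `K` such that every point of the ball starts a trajectory that stays in the ball
of radius `K` and ends in the ball of radius `1/2`. Rescaling and concatenating these pieces
gives, from every `x`, a trajectory whose `n`-th piece is bounded by `K ‖x‖ / 2ⁿ`.
-/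

open Filter Metric Set Topology

theorem Convex.mem_nhds_zero_of_absorbent {E : Type*} [NormedAddCommGroup E] [NormedSpace ℝ E]
    [FiniteDimensional ℝ E] {s : Set E} (hs : Convex ℝ s) (hs₀ : Absorbent ℝ s) :
    s ∈ 𝓝 (0 : E) := by
  have hconv : ConvexOn ℝ univ (gauge s) := by
    refine ⟨convex_univ, fun x _ y _ a b ha hb _ => ?_⟩
    calc gauge s (a • x + b • y) ≤ gauge s (a • x) + gauge s (b • y) := gauge_add_le hs hs₀ _ _
      _ = a • gauge s x + b • gauge s y := by
        rw [gauge_smul_of_nonneg ha, gauge_smul_of_nonneg hb]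
  have hcont : Continuous (gauge s) :=
    continuousOn_univ.mp (hconv.continuousOn isOpen_univ)
  have hlt : ∀ᶠ x in 𝓝 (0 : E), gauge s x < 1 :=
    (hcont.tendsto' 0 0 gauge_zero).eventually (gt_mem_nhds one_pos)
  exact mem_of_superset hlt (setOfPred_gauge_lt_one_subset_self hs hs₀.zero_mem hs₀)

theorem exists_concat_segments {α : Type*} (s : ℕ → ℕ → α) (ℓ : ℕ → ℕ) (hℓ : ∀ n, 1 ≤ ℓ n)
    (hs : ∀ n, s (n + 1) 0 = s n (ℓ n)) :
    ∃ (f : ℕ → α) (ν : ℕ → ℕ), f 0 = s 0 0 ∧ Tendsto ν atTop atTop ∧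
      ∀ k, ∃ j < ℓ (ν k), f k = s (ν k) j ∧ f (k + 1) = s (ν k) (j + 1) := by
  -- segment `n` occupies the times `T n, …, T (n + 1)`
  obtain ⟨T, hT0, hT⟩ : ∃ T : ℕ → ℕ, T 0 = 0 ∧ ∀ n, T (n + 1) = T n + ℓ n :=
    ⟨fun n => ∑ m ∈ Finset.range n, ℓ m, rfl, fun n => Finset.sum_range_succ ℓ n⟩
  have hTmono : StrictMono T := strictMono_nat_of_lt_succ fun n => by grind
  have hexists : ∀ k, ∃ n, T n ≤ k ∧ k < T (n + 1) := by
    intro k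
    induction k with
    | zero => exact ⟨0, by grind, by grind⟩
    | succ k ih =>
      obtain ⟨n, hn, hk⟩ := ih
      by_cases hk' : k + 1 < T (n + 1)
      · exact ⟨n, by omega, hk'⟩
      · exact ⟨n + 1, by omega, by grind⟩
  choose ν hν using hexists
  have hν_eq (k n : ℕ) (h₁ : T n ≤ k) (h₂ : k < T (n + 1)) : ν k = n := by
    have := hTmono.lt_iff_lt.1 (h₁.trans_lt (hν k).2)
    have := hTmono.lt_iff_lt.1 ((hν k).1.trans_lt h₂)
    omega
  refine ⟨fun k => s (ν k) (k - T (ν k)), ν, ?_, ?_, fun k => ⟨k - T (ν k), ?_, rfl, ?_⟩⟩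
  · simp [hν_eq 0 0 (by omega) (by grind), hT0]
  · exact tendsto_atTop_atTop.2 fun N => ⟨T N, fun k hk =>
      Nat.lt_succ_iff.1 (hTmono.lt_iff_lt.1 (hk.trans_lt (hν k).2))⟩
  · grind
  · show s (ν (k + 1)) (k + 1 - T (ν (k + 1))) = s (ν k) (k - T (ν k) + 1)
    have hk := hν k
    by_cases hk' : k + 1 < T (ν k + 1)
    · rw [hν_eq (k + 1) (ν k) (by omega) hk']
      congr 1
      omega
    · have hend : k + 1 = T (ν k + 1) := by omega
      have hnext : k + 1 < T (ν k + 1 + 1) := by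
        rw [hT]; have := hℓ (ν k + 1); omega
      rw [hν_eq (k + 1) (ν k + 1) hend.ge hnext, ← hend, Nat.sub_self, hs]
      congr 1
      have := hT (ν k); omega

variable {E : Type*}

def IsTrajectory (H : E → Set E) (ℓ : ℕ) (a : ℕ → E) : Prop :=
  ∀ i < ℓ, a (i + 1) ∈ H (a i)

theorem mem_sIter_iff {H : E → Set E} {ℓ : ℕ} {x u : E} :
    u ∈ SIter H ℓ x ↔ ∃ a : ℕ → E, a 0 = x ∧ IsTrajectory H ℓ a ∧ a ℓ = u := by
  induction ℓ generalizing u with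
  | zero =>
    refine ⟨fun hu => ⟨fun _ => x, rfl, fun i hi => absurd hi (Nat.not_lt_zero i), hu.symm⟩, ?_⟩
    rintro ⟨a, rfl, -, rfl⟩
    rfl
  | succ n ih =>
    simp only [SIter, mem_iUnion, exists_prop]
    constructor
    · rintro ⟨y, hy, hu⟩
      obtain ⟨a, ha0, ha, rfl⟩ := ih.1 hy
      refine ⟨Function.update a (n + 1) u, by simp [ha0], fun i hi => ?_, by simp⟩
      rcases Nat.lt_succ_iff_lt_or_eq.1 hi with hi | rfl
      · simpa [Function.update_of_ne (by omega : i + 1 ≠ n + 1),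
          Function.update_of_ne (by omega : i ≠ n + 1)] using ha i hi
      · simpa using hu
    · rintro ⟨a, ha0, ha, rfl⟩
      exact ⟨a n, ih.2 ⟨a, ha0, fun i hi => ha i (hi.trans n.lt_succ_self), rfl⟩,
        ha n n.lt_succ_self⟩

theorem exists_forall_isTrajectory {H : E → Set E} (hne : ∀ x, (H x).Nonempty) (x : E) :
    ∃ a : ℕ → E, a 0 = x ∧ ∀ ℓ, IsTrajectory H ℓ a :=
  ⟨fun k => Nat.rec x (fun _ y => (hne y).some) k, rfl, fun _ _ _ => (hne _).some_mem⟩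

structure IsConvexProcess [AddCommGroup E] [Module ℝ E] (H : E → Set E) : Prop where
  convex_graph : Convex ℝ {p : E × E | p.2 ∈ H p.1}
  smul_mem : ∀ c : ℝ, 0 ≤ c → ∀ x y, y ∈ H x → c • y ∈ H (c • x)

namespace IsConvexProcess

variable [AddCommGroup E] [Module ℝ E] {H : E → Set E}

theorem add_mem (hH : IsConvexProcess H) {x₁ x₂ y₁ y₂ : E} (h₁ : y₁ ∈ H x₁) (h₂ : y₂ ∈ H x₂) :
    y₁ + y₂ ∈ H (x₁ + x₂) := by
  have hmid : ((2 : ℝ)⁻¹ • y₁ + (2 : ℝ)⁻¹ • y₂) ∈ H ((2 : ℝ)⁻¹ • x₁ + (2 : ℝ)⁻¹ • x₂) :=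
    hH.convex_graph (x := (x₁, y₁)) (y := (x₂, y₂)) h₁ h₂ (by norm_num) (by norm_num) (by norm_num)
  simpa [← smul_add, smul_smul] using hH.smul_mem 2 zero_le_two _ _ hmid

theorem isTrajectory_add (hH : IsConvexProcess H) {ℓ : ℕ} {a b : ℕ → E} (ha : IsTrajectory H ℓ a)
    (hb : IsTrajectory H ℓ b) : IsTrajectory H ℓ (a + b) :=
  fun i hi => hH.add_mem (ha i hi) (hb i hi)

theorem isTrajectory_smul (hH : IsConvexProcess H) {ℓ : ℕ} {a : ℕ → E} (ha : IsTrajectory H ℓ a)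
    {c : ℝ} (hc : 0 ≤ c) : IsTrajectory H ℓ (c • a) :=
  fun i hi => hH.smul_mem c hc _ _ (ha i hi)

end IsConvexProcess

section Seminormed

variable [SeminormedAddCommGroup E] {H : E → Set E}

theorem iUnion_sIter_inter_closedBall_eq_univ_iff :
    (⋃ ℓ ∈ {ℓ : ℕ | 1 ≤ ℓ}, {x | (SIter H ℓ x ∩ closedBall (0 : E) 1).Nonempty}) = univ ↔
      ∀ x : E, ∃ ℓ ≥ 1, ∃ a : ℕ → E, a 0 = x ∧ IsTrajectory H ℓ a ∧ ‖a ℓ‖ ≤ 1 := by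
  simp only [eq_univ_iff_forall, mem_iUnion, mem_ofPred_eq, exists_prop, Set.Nonempty,
    mem_inter_iff, mem_sIter_iff, mem_closedBall_zero_iff]
  refine forall_congr' fun x => exists_congr fun ℓ => and_congr_right fun _ => ?_
  constructor
  · rintro ⟨_, ⟨a, ha0, ha, rfl⟩, hu⟩
    exact ⟨a, ha0, ha, hu⟩
  · rintro ⟨a, ha0, ha, hu⟩
    exact ⟨a ℓ, ⟨a, ha0, ha, rfl⟩, hu⟩

theorem WeaklyAsympStable.exists_isTrajectory_norm_le_one (h : WeaklyAsympStable H) (x : E) :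
    ∃ ℓ ≥ 1, ∃ a : ℕ → E, a 0 = x ∧ IsTrajectory H ℓ a ∧ ‖a ℓ‖ ≤ 1 := by
  obtain ⟨f, hf0, hf, hlim⟩ := h x
  obtain ⟨N, hN⟩ := (hlim.eventually (closedBall_mem_nhds (0 : E) one_pos)).exists_forall_of_atTop
  exact ⟨N + 1, by omega, f, hf0, fun i _ => hf i, by simpa using hN (N + 1) (by omega)⟩

variable (H) in
def HasHalvingTrajectory (K ρ : ℝ) (x : E) : Prop :=
  ∃ ℓ ≥ 1, ∃ a : ℕ → E, a 0 = x ∧ IsTrajectory H ℓ a ∧ ‖a ℓ‖ ≤ ρ / 2 ∧ ∀ i ≤ ℓ, ‖a i‖ ≤ K * ρ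

theorem HasHalvingTrajectory.mono {K K' ρ : ℝ} {x : E} (h : HasHalvingTrajectory H K ρ x)
    (hK : K ≤ K') (hρ : 0 ≤ ρ) : HasHalvingTrajectory H K' ρ x := by
  obtain ⟨ℓ, hℓ, a, ha0, ha, haℓ, haK⟩ := h
  exact ⟨ℓ, hℓ, a, ha0, ha, haℓ, fun i hi => (haK i hi).trans (by gcongr)⟩

theorem weaklyAsympStable_of_forall_hasHalvingTrajectory {K : ℝ}
    (h : ∀ x : E, HasHalvingTrajectory H K ‖x‖ x) : WeaklyAsympStable H := by
  intro x
  choose ℓ hℓ seg hseg0 hseg hsegℓ hsegK using h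
  let p : ℕ → E := fun n => Nat.rec x (fun _ y => seg y (ℓ y)) n
  have hp : ∀ n, ‖p n‖ ≤ (1 / 2) ^ n * ‖x‖ := by
    intro n
    induction n with
    | zero => simp [p]
    | succ n ih =>
      calc ‖p (n + 1)‖ ≤ ‖p n‖ / 2 := hsegℓ (p n)
        _ ≤ (1 / 2) ^ (n + 1) * ‖x‖ := by rw [pow_succ]; linarith
  have hp_lim : Tendsto (fun n => ‖p n‖) atTop (𝓝 0) := by
    refine squeeze_zero (fun _ => norm_nonneg _) hp ?_
    simpa using (tendsto_pow_atTop_nhds_zero_of_lt_one (r := (1 / 2 : ℝ)) (by norm_num)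
      (by norm_num)).mul_const ‖x‖
  obtain ⟨f, ν, hf0, hν, hf⟩ := exists_concat_segments (fun n => seg (p n)) (fun n => ℓ (p n))
    (fun n => hℓ (p n)) (fun n => hseg0 (p (n + 1)))
  refine ⟨f, by simpa [p, hseg0] using hf0, fun k => ?_, ?_⟩
  · obtain ⟨j, hj, hfk, hfk'⟩ := hf k
    rw [hfk, hfk']
    exact hseg _ j hj
  · have hbound : ∀ k, ‖f k‖ ≤ K * ‖p (ν k)‖ := fun k => by
      obtain ⟨j, hj, hfk, -⟩ := hf k
      exact hfk ▸ hsegK _ j hj.le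
    exact squeeze_zero_norm hbound (by simpa using (hp_lim.comp hν).const_mul K)

end Seminormed

section Normed

variable [NormedAddCommGroup E] [NormedSpace ℝ E] {H : E → Set E}

theorem HasHalvingTrajectory.smul (hH : IsConvexProcess H) {K ρ : ℝ} {x : E}
    (h : HasHalvingTrajectory H K ρ x) {c : ℝ} (hc : 0 ≤ c) :
    HasHalvingTrajectory H K (c * ρ) (c • x) := by
  obtain ⟨ℓ, hℓ, a, ha0, ha, haℓ, haK⟩ := h
  refine ⟨ℓ, hℓ, c • a, by simp [ha0], hH.isTrajectory_smul ha hc, ?_, fun i hi => ?_⟩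
  · simpa [norm_smul, abs_of_nonneg hc, mul_div_assoc] using mul_le_mul_of_nonneg_left haℓ hc
  · simpa [norm_smul, abs_of_nonneg hc, mul_left_comm c K] using
      mul_le_mul_of_nonneg_left (haK i hi) hc

theorem eventually_exists_isTrajectory_mem_ball [FiniteDimensional ℝ E] (hH : IsConvexProcess H)
    (hne : ∀ x, (H x).Nonempty) (ℓ : ℕ) {ε : ℝ} (hε : 0 < ε) :
    ∀ᶠ z in 𝓝 (0 : E), ∃ a : ℕ → E, a 0 = z ∧ IsTrajectory H ℓ a ∧ ∀ i ≤ ℓ, a i ∈ ball 0 ε := by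
  set V := {z : E | ∃ a : ℕ → E, a 0 = z ∧ IsTrajectory H ℓ a ∧ ∀ i ≤ ℓ, a i ∈ ball 0 ε}
  have hconvex : Convex ℝ V := by
    rintro _ ⟨a, rfl, ha, haε⟩ _ ⟨b, rfl, hb, hbε⟩ s t hs ht hst
    exact ⟨s • a + t • b, rfl,
      hH.isTrajectory_add (hH.isTrajectory_smul ha hs) (hH.isTrajectory_smul hb ht),
      fun i hi => convex_ball 0 ε (haε i hi) (hbε i hi) hs ht hst⟩
  have hsmul : ∀ x : E, ∀ᶠ c in 𝓝 (0 : ℝ), 0 ≤ c → c • x ∈ V := by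
    intro x
    obtain ⟨a, rfl, ha⟩ := exists_forall_isTrajectory hne x
    have hsmall : ∀ i, ∀ᶠ c in 𝓝 (0 : ℝ), c • a i ∈ ball 0 ε := fun i =>
      ((continuous_id.smul continuous_const).tendsto' 0 0 (zero_smul ℝ (a i))).eventually
        (ball_mem_nhds 0 hε)
    filter_upwards [(eventually_all_finite (finite_le_nat ℓ)).2 fun i _ => hsmall i] with c hc hc₀
    exact ⟨c • a, rfl, hH.isTrajectory_smul (ha ℓ) hc₀, hc⟩
  have habsorbent : Absorbent ℝ V := by
    refine absorbent_iff_eventually_nhdsNE_zero.2 fun x => ?_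
    have hneg := (continuous_neg.tendsto' (0 : ℝ) 0 neg_zero).eventually (hsmul (-x))
    filter_upwards [nhdsWithin_le_nhds (hsmul x), nhdsWithin_le_nhds hneg] with c hpos hneg
    rcases le_total 0 c with hc | hc
    · exact hpos hc
    · simpa using hneg (neg_nonneg.2 hc)
  exact hconvex.mem_nhds_zero_of_absorbent habsorbent

theorem eventually_exists_isTrajectory_norm_sub_lt [FiniteDimensional ℝ E] (hH : IsConvexProcess H)
    (hne : ∀ x, (H x).Nonempty) {ℓ : ℕ} {a : ℕ → E} (ha : IsTrajectory H ℓ a) {ε : ℝ}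
    (hε : 0 < ε) :
    ∀ᶠ y in 𝓝 (a 0), ∃ b : ℕ → E, b 0 = y ∧ IsTrajectory H ℓ b ∧ ∀ i ≤ ℓ, ‖b i - a i‖ < ε := by
  have hsub : Tendsto (· - a 0) (𝓝 (a 0)) (𝓝 0) := by
    simpa using (continuous_sub_right (a 0)).tendsto (a 0)
  filter_upwards [hsub.eventually (eventually_exists_isTrajectory_mem_ball hH hne ℓ hε)]
    with y ⟨c, hc0, hc, hcε⟩
  refine ⟨a + c, by simp [hc0], hH.isTrajectory_add ha hc, fun i hi => ?_⟩
  simpa using hcε i hi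

theorem exists_forall_mem_closedBall_hasHalvingTrajectory [FiniteDimensional ℝ E]
    (hH : IsConvexProcess H) (hne : ∀ x, (H x).Nonempty)
    (hreach : ∀ x : E, ∃ ℓ ≥ 1, ∃ a : ℕ → E, a 0 = x ∧ IsTrajectory H ℓ a ∧ ‖a ℓ‖ ≤ 1) :
    ∃ K : ℝ, ∀ x ∈ closedBall (0 : E) 1, HasHalvingTrajectory H K 1 x := by
  have hlocal : ∀ x : E, ∃ K : ℕ, ∀ᶠ y in 𝓝 x, HasHalvingTrajectory H K 1 y := by
    intro x
    obtain ⟨ℓ, hℓ, a, ha0, ha, haℓ⟩ := hreach ((3 : ℝ) • x)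
    have hb0 : ((3 : ℝ)⁻¹ • a) 0 = x := by simp [ha0]
    have hbℓ : ‖((3 : ℝ)⁻¹ • a) ℓ‖ ≤ 1 / 3 := by
      rw [Pi.smul_apply, norm_smul]; norm_num; linarith
    obtain ⟨M, hM⟩ := ((finite_le_nat ℓ).image fun i => ‖((3 : ℝ)⁻¹ • a) i‖).bddAbove
    obtain ⟨K, hK⟩ := exists_nat_ge (M + 1)
    refine ⟨K, ?_⟩
    filter_upwards [hb0 ▸ eventually_exists_isTrajectory_norm_sub_lt hH hne
      (hH.isTrajectory_smul ha (by norm_num : (0 : ℝ) ≤ 3⁻¹)) (by norm_num : (0 : ℝ) < 1 / 6)]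
      with y ⟨c, hc0, hc, hcb⟩
    refine ⟨ℓ, hℓ, c, hc0, hc, ?_, fun i hi => ?_⟩
    · linarith [norm_sub_norm_le (c ℓ) (((3 : ℝ)⁻¹ • a) ℓ), hcb ℓ le_rfl]
    · linarith [norm_sub_norm_le (c i) (((3 : ℝ)⁻¹ • a) i), hcb i hi, hM ⟨i, hi, rfl⟩]
  choose K hK using hlocal
  obtain ⟨N, hN⟩ := (isCompact_closedBall (0 : E) 1).elim_directed_cover
    (fun N : ℕ => interior {y | HasHalvingTrajectory H N 1 y}) (fun _ => isOpen_interior)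
    (fun x _ => mem_iUnion.2 ⟨K x, mem_interior_iff_mem_nhds.2 (hK x)⟩)
    (Monotone.directed_le fun m n hmn =>
      interior_mono fun y hy => hy.mono (Nat.cast_le.2 hmn) zero_le_one)
  exact ⟨N, fun x hx => (interior_subset (hN hx) : x ∈ {y | HasHalvingTrajectory H N 1 y})⟩

theorem exists_forall_hasHalvingTrajectory_norm [FiniteDimensional ℝ E] (hH : IsConvexProcess H)
    (hne : ∀ x, (H x).Nonempty)
    (hreach : ∀ x : E, ∃ ℓ ≥ 1, ∃ a : ℕ → E, a 0 = x ∧ IsTrajectory H ℓ a ∧ ‖a ℓ‖ ≤ 1) :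
    ∃ K : ℝ, ∀ x : E, HasHalvingTrajectory H K ‖x‖ x := by
  obtain ⟨K, hK⟩ := exists_forall_mem_closedBall_hasHalvingTrajectory hH hne hreach
  refine ⟨K, fun x => ?_⟩
  rcases eq_or_ne x 0 with rfl | hx
  · simpa using (hK 0 (mem_closedBall_self zero_le_one)).smul hH le_rfl
  · have hu : ‖x‖⁻¹ • x ∈ closedBall (0 : E) 1 := by
      rw [mem_closedBall_zero_iff, norm_smul, norm_inv, norm_norm,
        inv_mul_cancel₀ (norm_ne_zero_iff.2 hx)]
    simpa [smul_inv_smul₀ (norm_ne_zero_iff.2 hx)] using (hK _ hu).smul hH (norm_nonneg x)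

end Normed

/-- A strict convex process `H : ℝ^r ⇉ ℝ^r` is weakly asymptotically stable iff
`⋃_{ℓ≥1} H^{-ℓ}(𝔹) = ℝ^r`. -/
theorem stmt7 {r : ℕ} (H : EuclideanSpace ℝ (Fin r) → Set (EuclideanSpace ℝ (Fin r)))
    (hconv : Convex ℝ {p : EuclideanSpace ℝ (Fin r) × EuclideanSpace ℝ (Fin r) | p.2 ∈ H p.1})
    (hcone : ∀ c : ℝ, 0 ≤ c → ∀ x y, y ∈ H x → c • y ∈ H (c • x))
    (hstrict : ∀ x, (H x).Nonempty) :
    WeaklyAsympStable H ↔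
      (⋃ ℓ ∈ {ℓ : ℕ | 1 ≤ ℓ},
        {x | (SIter H ℓ x ∩ Metric.closedBall (0 : EuclideanSpace ℝ (Fin r)) 1).Nonempty}) =
        Set.univ := by
  have hH : IsConvexProcess H := ⟨hconv, hcone⟩
  rw [iUnion_sIter_inter_closedBall_eq_univ_iff]
  refine ⟨fun h => h.exists_isTrajectory_norm_le_one, fun hreach => ?_⟩
  obtain ⟨K, hK⟩ := exists_forall_hasHalvingTrajectory_norm hH hstrict hreach
  exact weaklyAsympStable_of_forall_hasHalvingTrajectory hK
end

section
/- Let H: ℝ^r ⇉ ℝ^r be a convex process, λ ∈ [0,1), and suppose x ∈ (H − λI)^{-k}(0) for some k ≥ 1, witnessed by a sequence x_0 = x, x_1, …, with x_{j+1} ∈ H(x_j) − λx_j and x_j = 0 for j ≥ k. Then the sequence z_j = Σ_{i=max{0,j−k}}^{j} C(j,i) λ^i x_{j−i} is a solution of z_{j+1} ∈ H(z_j) starting from x and converging to zero. -/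
open Finset Filter Topology

/-! If `x` solves the shifted inclusion `x_{j+1} ∈ (H - λI)(x_j)`, then `z_j` is the binomial
expansion of `(T + λ)^j x_0` for the shift `T`, so Pascal's rule writes `z_{j+1}` as a nonnegative
combination of the points `x_{j-i+1} + λ x_{j-i} ∈ H(x_{j-i})`; the graph of `H` is a convex cone,
hence closed under such combinations. As `x` vanishes from index `k` on, `z_j` is a combination of
`x_0, …, x_{k-1}` with coefficients `C(j,m) λ^(j-m)`, which tend to zero because `0 ≤ λ < 1`. -/

structure IsConvexProcess_s8 {E F : Type*} [AddCommGroup E] [Module ℝ E] [AddCommGroup F]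
    [Module ℝ F] (H : E → Set F) : Prop where
  convex_graph : Convex ℝ {p : E × F | p.2 ∈ H p.1}
  smul_mem : ∀ c : ℝ, 0 ≤ c → ∀ x y, y ∈ H x → c • y ∈ H (c • x)

namespace IsConvexProcess_s8

variable {E F : Type*} [AddCommGroup E] [Module ℝ E] [AddCommGroup F] [Module ℝ F]
  {H : E → Set F}

theorem zero_mem (hH : IsConvexProcess_s8 H) {x : E} {y : F} (hy : y ∈ H x) : (0 : F) ∈ H 0 := by
  simpa using hH.smul_mem 0 le_rfl x y hy

theorem add_mem_s8 (hH : IsConvexProcess_s8 H) {a b : E} {ya yb : F} (ha : ya ∈ H a)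
    (hb : yb ∈ H b) : ya + yb ∈ H (a + b) := by
  have hmid : (2⁻¹ : ℝ) • ya + (2⁻¹ : ℝ) • yb ∈ H ((2⁻¹ : ℝ) • a + (2⁻¹ : ℝ) • b) :=
    hH.convex_graph (x := (a, ya)) (y := (b, yb)) ha hb (by norm_num) (by norm_num) (by norm_num)
  simpa [smul_add, smul_smul] using hH.smul_mem 2 zero_le_two _ _ hmid

theorem sum_smul_mem (hH : IsConvexProcess_s8 H) (h0 : (0 : F) ∈ H 0) {ι : Type*} (s : Finset ι)
    {c : ι → ℝ} {x : ι → E} {y : ι → F} (hc : ∀ i ∈ s, 0 ≤ c i) (hy : ∀ i ∈ s, y i ∈ H (x i)) :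
    ∑ i ∈ s, c i • y i ∈ H (∑ i ∈ s, c i • x i) := by
  classical
  induction s using Finset.induction_on with
  | empty => simpa using h0
  | insert i s hi ih =>
    rw [sum_insert hi, sum_insert hi]
    exact hH.add_mem_s8 (hH.smul_mem _ (hc i (mem_insert_self i s)) _ _ (hy i (mem_insert_self i s)))
      (ih (fun j hj => hc j (mem_insert_of_mem hj)) (fun j hj => hy j (mem_insert_of_mem hj)))

end IsConvexProcess_s8

section BinomialShift

variable {R E : Type*} [CommSemiring R] [AddCommMonoid E] [Module R E]

def binomialShift (lam : R) (x : ℕ → E) (j : ℕ) : E :=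
  ∑ p ∈ antidiagonal j, ((j.choose p.1 : R) * lam ^ p.1) • x p.2

theorem binomialShift_zero (lam : R) (x : ℕ → E) : binomialShift lam x 0 = x 0 := by
  simp [binomialShift]

theorem binomialShift_succ (lam : R) (x : ℕ → E) (j : ℕ) :
    binomialShift lam x (j + 1) =
      ∑ p ∈ antidiagonal j, ((j.choose p.1 : R) * lam ^ p.1) • (x (p.2 + 1) + lam • x p.2) := by
  simp only [binomialShift, mul_smul, Nat.cast_smul_eq_nsmul]
  rw [sum_antidiagonal_choose_succ_nsmul (fun i l => lam ^ i • x l), ← sum_add_distrib]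
  refine sum_congr rfl fun p hp => ?_
  rw [Nat.choose_symm_of_eq_add (mem_antidiagonal.1 hp).symm, pow_succ, mul_smul, smul_add,
    smul_add]

theorem binomialShift_eq_sum_range_sub (lam : R) (x : ℕ → E) (j : ℕ) :
    binomialShift lam x j = ∑ i ∈ range (j + 1), ((j.choose i : R) * lam ^ i) • x (j - i) :=
  Nat.sum_antidiagonal_eq_sum_range_succ (fun i l => ((j.choose i : R) * lam ^ i) • x l) j

theorem binomialShift_eq_sum_range {k : ℕ} (lam : R) {x : ℕ → E} (hx : ∀ j, k ≤ j → x j = 0)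
    (j : ℕ) :
    binomialShift lam x j = ∑ m ∈ range k, ((j.choose m : R) * lam ^ (j - m)) • x m := by
  set f : ℕ → E := fun m => ((j.choose m : R) * lam ^ (j - m)) • x m
  calc binomialShift lam x j = ∑ m ∈ range (j + 1), f m := by
        rw [binomialShift, ← Nat.sum_antidiagonal_swap,
          Nat.sum_antidiagonal_eq_sum_range_succ_mk]
        refine sum_congr rfl fun m hm => ?_
        simp only [Prod.swap_prod_mk, f, Nat.choose_symm (Nat.lt_succ_iff.1 (mem_range.1 hm))]
    _ = ∑ m ∈ range (j + 1 + k), f m :=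
        sum_subset (range_subset_range.2 (Nat.le_add_right _ _)) fun m _ hm => by
          simp [f, Nat.choose_eq_zero_of_lt (Nat.succ_le_iff.1 (not_lt.1 (mt mem_range.2 hm)))]
    _ = ∑ m ∈ range k, f m :=
        (sum_subset (range_subset_range.2 (Nat.le_add_left _ _)) fun m _ hm => by
          simp [f, hx m (not_lt.1 (mt mem_range.2 hm))]).symm

theorem binomialShift_eq_sum_Icc {k : ℕ} (lam : R) {x : ℕ → E} (hx : ∀ j, k ≤ j → x j = 0)
    (j : ℕ) :
    binomialShift lam x j = ∑ i ∈ Icc (j - k) j, ((j.choose i : R) * lam ^ i) • x (j - i) := by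
  rw [binomialShift_eq_sum_range_sub]
  refine (sum_subset (fun i hi => mem_range.2 (Nat.lt_succ_of_le (mem_Icc.1 hi).2))
    fun i hij hi => ?_).symm
  have hij : i ≤ j := Nat.lt_succ_iff.1 (mem_range.1 hij)
  have hlt : i < j - k := by simp only [mem_Icc, not_and_or, not_le] at hi; omega
  rw [hx (j - i) (by omega), smul_zero]

end BinomialShift

theorem tendsto_choose_mul_pow_sub_atTop {R : Type*} [NormedRing R] [HasSummableGeomSeries R]
    (m : ℕ) {r : R} (hr : ‖r‖ < 1) :
    Tendsto (fun j : ℕ => (j.choose m : R) * r ^ (j - m)) atTop (𝓝 0) := by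
  rw [← tendsto_add_atTop_iff_nat m]
  simpa only [Nat.add_sub_cancel] using
    (summable_choose_mul_geometric_of_norm_lt_one m hr).tendsto_atTop_zero

theorem tendsto_binomialShift_atTop {R E : Type*} [NormedCommRing R] [HasSummableGeomSeries R]
    [AddCommGroup E] [TopologicalSpace E] [IsTopologicalAddGroup E] [Module R E]
    [ContinuousSMul R E] {lam : R} (hlam : ‖lam‖ < 1) {k : ℕ} {x : ℕ → E}
    (hx : ∀ j, k ≤ j → x j = 0) : Tendsto (binomialShift lam x) atTop (𝓝 0) := by
  rw [funext (binomialShift_eq_sum_range lam hx)]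
  simpa using tendsto_finsetSum (range k) fun m _ =>
    (tendsto_choose_mul_pow_sub_atTop m hlam).smul_const (x m)

theorem IsConvexProcess_s8.binomialShift_succ_mem {E : Type*} [AddCommGroup E] [Module ℝ E]
    {H : E → Set E} (hH : IsConvexProcess_s8 H) {lam : ℝ} (hlam : 0 ≤ lam) {x : ℕ → E}
    (hx : ∀ j, x (j + 1) + lam • x j ∈ H (x j)) (j : ℕ) :
    binomialShift lam x (j + 1) ∈ H (binomialShift lam x j) := by
  rw [binomialShift_succ]
  exact hH.sum_smul_mem (hH.zero_mem (hx 0)) _ (fun _ _ => by positivity) fun p _ => hx p.2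

theorem stmt8_general {r : ℕ} (H : EuclideanSpace ℝ (Fin r) → Set (EuclideanSpace ℝ (Fin r)))
    (hconv : Convex ℝ {p : EuclideanSpace ℝ (Fin r) × EuclideanSpace ℝ (Fin r) | p.2 ∈ H p.1})
    (hcone : ∀ c : ℝ, 0 ≤ c → ∀ x y, y ∈ H x → c • y ∈ H (c • x))
    (lam : ℝ) (hlam0 : 0 ≤ lam) (hlam1 : lam < 1)
    (k : ℕ) (x : ℕ → EuclideanSpace ℝ (Fin r))
    (hstep : ∀ j, x (j + 1) + lam • x j ∈ H (x j))
    (hzero : ∀ j, k ≤ j → x j = 0) :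
    (fun j => ∑ i ∈ Finset.Icc (j - k) j, ((j.choose i : ℝ) * lam ^ i) • x (j - i)) 0 = x 0 ∧
    (∀ j, (fun j => ∑ i ∈ Finset.Icc (j - k) j, ((j.choose i : ℝ) * lam ^ i) • x (j - i)) (j + 1)
        ∈ H ((fun j => ∑ i ∈ Finset.Icc (j - k) j, ((j.choose i : ℝ) * lam ^ i) • x (j - i)) j)) ∧
    Filter.Tendsto
      (fun j => ∑ i ∈ Finset.Icc (j - k) j, ((j.choose i : ℝ) * lam ^ i) • x (j - i))
      Filter.atTop (nhds 0) := by
  have hH : IsConvexProcess_s8 H := ⟨hconv, hcone⟩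
  have hlam : ‖lam‖ < 1 := by rwa [Real.norm_of_nonneg hlam0]
  rw [← funext (binomialShift_eq_sum_Icc lam hzero)]
  exact ⟨binomialShift_zero lam x, hH.binomialShift_succ_mem hlam0 hstep,
    tendsto_binomialShift_atTop hlam hzero⟩

/-- Discrete-time analogue of Smirnov's Lemma 8.3: if `λ ∈ [0,1)` and
`x ∈ (H − λI)^{-k}(0)`, witnessed by a sequence with `x_{j+1} ∈ H(x_j) − λ x_j`
and `x_j = 0` for `j ≥ k`, then `z_j = ∑_{i=max{0,j−k}}^{j} C(j,i) λ^i x_{j−i}` is a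
solution of `z_{j+1} ∈ H(z_j)` starting from `x_0` and converging to zero. -/
theorem stmt8 {r : ℕ} (H : EuclideanSpace ℝ (Fin r) → Set (EuclideanSpace ℝ (Fin r)))
    (hconv : Convex ℝ {p : EuclideanSpace ℝ (Fin r) × EuclideanSpace ℝ (Fin r) | p.2 ∈ H p.1})
    (hcone : ∀ c : ℝ, 0 ≤ c → ∀ x y, y ∈ H x → c • y ∈ H (c • x))
    (lam : ℝ) (hlam0 : 0 ≤ lam) (hlam1 : lam < 1)
    (k : ℕ) (hk : 1 ≤ k) (x : ℕ → EuclideanSpace ℝ (Fin r))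
    (hstep : ∀ j, x (j + 1) + lam • x j ∈ H (x j))
    (hzero : ∀ j, k ≤ j → x j = 0) :
    (fun j => ∑ i ∈ Finset.Icc (j - k) j, ((j.choose i : ℝ) * lam ^ i) • x (j - i)) 0 = x 0 ∧
    (∀ j, (fun j => ∑ i ∈ Finset.Icc (j - k) j, ((j.choose i : ℝ) * lam ^ i) • x (j - i)) (j + 1)
        ∈ H ((fun j => ∑ i ∈ Finset.Icc (j - k) j, ((j.choose i : ℝ) * lam ^ i) • x (j - i)) j)) ∧
    Filter.Tendsto
      (fun j => ∑ i ∈ Finset.Icc (j - k) j, ((j.choose i : ℝ) * lam ^ i) • x (j - i))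
      Filter.atTop (nhds 0) :=
  stmt8_general H hconv hcone lam hlam0 hlam1 k x hstep hzero
end

section
/- Suppose 𝒦(Σ) ∩ 𝒴 = {0}. Then the reachable set of the convex set-valued map F equals the strongly reachable subspace: R(F) = 𝒯*(Σ). -/
open Pointwise

/-- `X(F)`: initial states of infinite solutions of `x_{k+1} ∈ F(x_k)`. -/
def XSet {E : Type*} (F : E → Set E) : Set E :=
  {x | ∃ f : ℕ → E, f 0 = x ∧ ∀ k, f (k + 1) ∈ F (f k)}

/-- `R(F) = ⋃_{ℓ ≥ 1} F^ℓ(0)`. -/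
def RSet {E : Type*} [Zero E] (F : E → Set E) : Set E :=
  ⋃ ℓ ∈ {ℓ : ℕ | 1 ≤ ℓ}, SIter F ℓ 0

/-- The set-valued map `F(x) = Ax + B D^{-1}(𝒴 − Cx)` of the constrained system `(Σ,𝒴)`. -/
def Fmap {n m s : ℕ} (A : Matrix (Fin n) (Fin n) ℝ) (B : Matrix (Fin n) (Fin m) ℝ)
    (C : Matrix (Fin s) (Fin n) ℝ) (D : Matrix (Fin s) (Fin m) ℝ)
    (Y : Set (Fin s → ℝ)) : (Fin n → ℝ) → Set (Fin n → ℝ) :=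
  fun x => {z | ∃ u : Fin m → ℝ, C.mulVec x + D.mulVec u ∈ Y ∧ z = A.mulVec x + B.mulVec u}

/-- The strongly reachable subspace `𝒯*(Σ)`: states reachable from `0` with the output
kept identically zero along the way. -/
def Tstar {n m s : ℕ} (A : Matrix (Fin n) (Fin n) ℝ) (B : Matrix (Fin n) (Fin m) ℝ)
    (C : Matrix (Fin s) (Fin n) ℝ) (D : Matrix (Fin s) (Fin m) ℝ) : Set (Fin n → ℝ) :=
  RSet (Fmap A B C D ({0} : Set (Fin s → ℝ)))

/-- The weakly unobservable subspace `𝒱*(Σ)`: initial states for which an input exists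
making the output identically zero. -/
def Vstar {n m s : ℕ} (A : Matrix (Fin n) (Fin n) ℝ) (B : Matrix (Fin n) (Fin m) ℝ)
    (C : Matrix (Fin s) (Fin n) ℝ) (D : Matrix (Fin s) (Fin m) ℝ) : Set (Fin n → ℝ) :=
  XSet (Fmap A B C D ({0} : Set (Fin s → ℝ)))

/-- `𝒦(Σ) = im D + C 𝒯*(Σ)`. -/
def Kset {n m s : ℕ} (A : Matrix (Fin n) (Fin n) ℝ) (B : Matrix (Fin n) (Fin m) ℝ)
    (C : Matrix (Fin s) (Fin n) ℝ) (D : Matrix (Fin s) (Fin m) ℝ) : Set (Fin s → ℝ) :=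
  {y | ∃ (u : Fin m → ℝ) (t : Fin n → ℝ), t ∈ Tstar A B C D ∧ y = D.mulVec u + C.mulVec t}

/-- The image `im [C D]`. -/
def CDrange {n m s : ℕ} (C : Matrix (Fin s) (Fin n) ℝ) (D : Matrix (Fin s) (Fin m) ℝ) :
    Set (Fin s → ℝ) :=
  Set.range (fun p : (Fin n → ℝ) × (Fin m → ℝ) => C.mulVec p.1 + D.mulVec p.2)

/-!
By induction on `ℓ`, every state of `F^ℓ(0)` lies in `𝒯*(Σ)`: from a state `x ∈ 𝒯*(Σ)` any
admissible output `Cx + Du ∈ 𝒴` also lies in `𝒦(Σ)`, hence is `0`, so the step is one of the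
zero-output system. Thus `F` and the map with `𝒴` replaced by `{0}` have the same iterates
from `0`.
-/

theorem SIter_subset_SIter {E : Type*} {F G : E → Set E} {a : E}
    (hFG : ∀ k, ∀ x ∈ SIter G k a, F x ⊆ G x) (ℓ : ℕ) : SIter F ℓ a ⊆ SIter G ℓ a := by
  induction ℓ with
  | zero => rfl
  | succ k ih => exact Set.biUnion_mono ih (hFG k)

section Fmap

variable {n m s : ℕ} (A : Matrix (Fin n) (Fin n) ℝ) (B : Matrix (Fin n) (Fin m) ℝ)
  (C : Matrix (Fin s) (Fin n) ℝ) (D : Matrix (Fin s) (Fin m) ℝ)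

theorem Fmap_mono {Y Y' : Set (Fin s → ℝ)} (hY : Y ⊆ Y') (x : Fin n → ℝ) :
    Fmap A B C D Y x ⊆ Fmap A B C D Y' x :=
  fun _ ⟨u, hu, hz⟩ => ⟨u, hY hu, hz⟩

theorem zero_mem_Tstar : (0 : Fin n → ℝ) ∈ Tstar A B C D := by
  refine Set.mem_biUnion (Nat.le_refl 1) ?_
  simp only [SIter, Set.mem_iUnion, Set.mem_singleton_iff, exists_prop, exists_eq_left]
  exact ⟨0, by simp, by simp⟩

theorem SIter_Fmap_zero_subset_Tstar (ℓ : ℕ) :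
    SIter (Fmap A B C D {0}) ℓ 0 ⊆ Tstar A B C D := by
  cases ℓ with
  | zero => simpa [SIter] using zero_mem_Tstar A B C D
  | succ k => exact Set.subset_biUnion_of_mem (u := fun ℓ => SIter _ ℓ 0) k.succ_pos

theorem Fmap_subset_Fmap_zero_of_mem_Tstar {Y : Set (Fin s → ℝ)}
    (hK : Kset A B C D ∩ Y ⊆ {0}) {x : Fin n → ℝ} (hx : x ∈ Tstar A B C D) :
    Fmap A B C D Y x ⊆ Fmap A B C D {0} x :=
  fun _ ⟨u, hu, hz⟩ => ⟨u, hK ⟨⟨u, x, hx, add_comm _ _⟩, hu⟩, hz⟩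

end Fmap

theorem stmt10_general {n m s : ℕ} (A : Matrix (Fin n) (Fin n) ℝ) (B : Matrix (Fin n) (Fin m) ℝ)
    (C : Matrix (Fin s) (Fin n) ℝ) (D : Matrix (Fin s) (Fin m) ℝ)
    (Y : Set (Fin s → ℝ)) (h0Y : (0 : Fin s → ℝ) ∈ Y)
    (hK : Kset A B C D ∩ Y = {0}) :
    RSet (Fmap A B C D Y) = Tstar A B C D := by
  have hiter (ℓ : ℕ) : SIter (Fmap A B C D Y) ℓ 0 = SIter (Fmap A B C D {0}) ℓ 0 := by
    apply subset_antisymm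
    · refine SIter_subset_SIter (fun k x hx => ?_) ℓ
      exact Fmap_subset_Fmap_zero_of_mem_Tstar A B C D hK.subset
        (SIter_Fmap_zero_subset_Tstar A B C D k hx)
    · exact SIter_subset_SIter (fun _ _ _ => Fmap_mono A B C D (by simpa using h0Y) _) ℓ
  simp only [RSet, Tstar, hiter]

/-- If `𝒦(Σ) ∩ 𝒴 = {0}`, then `R(F) = 𝒯*(Σ)`. -/
theorem stmt10 {n m s : ℕ} (A : Matrix (Fin n) (Fin n) ℝ) (B : Matrix (Fin n) (Fin m) ℝ)
    (C : Matrix (Fin s) (Fin n) ℝ) (D : Matrix (Fin s) (Fin m) ℝ)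
    (Y : Set (Fin s → ℝ)) (hY : Convex ℝ Y) (h0Y : (0 : Fin s → ℝ) ∈ Y)
    (hsolid : (interior (Y ∩ CDrange C D)).Nonempty)
    (hK : Kset A B C D ∩ Y = {0}) :
    RSet (Fmap A B C D Y) = Tstar A B C D :=
  stmt10_general A B C D Y h0Y hK
end

section
/- Suppose 𝒦(Σ) + 𝒴 = ℝ^s. Then X(F) = X_n(F), i.e., the feasible set X(F) is finitely determined: a state admitting a constrained trajectory of length n admits an infinite constrained trajectory. -/
/-!
Write `F_𝒴` for `Fmap A B C D 𝒴` and `F₀` for `Fmap A B C D {0}`. The map `F_𝒴` is affine in the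
sense that `F_𝒴(x) + F₀(v) ⊆ F_𝒴(x + v)`, so zero-output trajectories can be superposed on
constrained ones. The sets `F₀^ℓ(0)` form an increasing chain of subspaces, which stabilises
after `n` steps; hence every point of `𝒯*(Σ)` is reached from `0` in exactly `n` zero-output
steps.

Given a constrained trajectory of length `n` ending at `z`, split `Cz = Du + Ct + y` with
`t ∈ 𝒯*(Σ)` and `y ∈ 𝒴`. Superposing a zero-output trajectory from `0` to `-t` moves the endpoint
to `z - t`, where the input `-u` produces the admissible output `y`; so the trajectory extends to
length `n + 1`. Since `X_{n+1}(F) = X_n(F)`, a state in `X_n(F)` always has a successor in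
`X_n(F)`, and iterating gives an infinite solution.
-/

open Pointwise

open Module Matrix

section SetValuedDynamics

variable {E : Type*} (F : E → Set E)

theorem mem_SIter_succ' (ℓ : ℕ) (x z : E) :
    z ∈ SIter F (ℓ + 1) x ↔ ∃ y ∈ F x, z ∈ SIter F ℓ y := by
  induction ℓ generalizing z with
  | zero => simp [SIter]
  | succ ℓ ih =>
    simp only [SIter, Set.mem_iUnion, exists_prop] at ih ⊢
    constructor
    · rintro ⟨w, hw, hzw⟩
      obtain ⟨y, hy, hwy⟩ := (ih w).1 hw
      exact ⟨y, hy, w, hwy, hzw⟩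
    · rintro ⟨y, hy, w, hwy, hzw⟩
      exact ⟨w, (ih w).2 ⟨y, hy, hwy⟩, hzw⟩

theorem mem_SIter_of_forall_mem {f : ℕ → E} (hf : ∀ k, f (k + 1) ∈ F (f k)) (k : ℕ) :
    f k ∈ SIter F k (f 0) := by
  induction k with
  | zero => exact Set.mem_singleton _
  | succ k ih => exact Set.mem_biUnion ih (hf k)

theorem XSet_eq_of_SIter_succ_nonempty {N : ℕ}
    (h : ∀ x, (SIter F N x).Nonempty → (SIter F (N + 1) x).Nonempty) :
    XSet F = {x | (SIter F N x).Nonempty} := by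
  ext x
  refine ⟨fun ⟨f, hf0, hf⟩ => ⟨f N, hf0 ▸ mem_SIter_of_forall_mem F hf N⟩, fun hx => ?_⟩
  have step : ∀ y : {y // (SIter F N y).Nonempty}, ∃ z : {z // (SIter F N z).Nonempty},
      z.1 ∈ F y.1 := by
    rintro ⟨y, hy⟩
    obtain ⟨w, hw⟩ := h y hy
    obtain ⟨z, hz, hwz⟩ := (mem_SIter_succ' F N y w).1 hw
    exact ⟨⟨z, w, hwz⟩, hz⟩
  choose next hnext using step
  refine ⟨fun k => (next^[k] ⟨x, hx⟩).1, rfl, fun k => ?_⟩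
  show (next^[k + 1] _).1 ∈ F (next^[k] _).1
  rw [Function.iterate_succ_apply']
  exact hnext _

end SetValuedDynamics

theorem Submodule.iterate_bot_le_iterate_finrank_bot {K V : Type*} [DivisionRing K]
    [AddCommGroup V] [Module K V] [FiniteDimensional K V]
    {Φ : Submodule K V → Submodule K V} (hΦ : Monotone Φ) (ℓ : ℕ) :
    Φ^[ℓ] ⊥ ≤ Φ^[finrank K V] ⊥ := by
  have hmono : Monotone fun k => Φ^[k] ⊥ := hΦ.monotone_iterate_of_le_map bot_le
  have eq_of_finrank_eq {j k : ℕ} (hjk : j ≤ k)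
      (h : finrank K (Φ^[j] ⊥) = finrank K (Φ^[k] ⊥)) : Φ^[j] ⊥ = Φ^[k] ⊥ :=
    Submodule.eq_of_le_of_finrank_eq (hmono hjk) h
  rcases le_total ℓ (finrank K V) with hℓ | hℓ
  · exact hmono hℓ
  have hstab := Nat.stabilises_of_monotone (f := fun k => finrank K (Φ^[k] ⊥))
    (fun j k hjk => Submodule.finrank_mono (hmono hjk)) (fun k => Submodule.finrank_le _)
    (fun k hk => by
      rw [Function.iterate_succ_apply' Φ (k + 1), ← eq_of_finrank_eq k.le_succ hk,
        ← Function.iterate_succ_apply' Φ k ⊥]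
      exact hk) hℓ
  exact (eq_of_finrank_eq hℓ hstab.symm).ge

section ConstrainedSystem

variable {n m s : ℕ} (A : Matrix (Fin n) (Fin n) ℝ) (B : Matrix (Fin n) (Fin m) ℝ)
  (C : Matrix (Fin s) (Fin n) ℝ) (D : Matrix (Fin s) (Fin m) ℝ)

theorem add_mem_Fmap {Y : Set (Fin s → ℝ)} {x v z w : Fin n → ℝ}
    (hz : z ∈ Fmap A B C D Y x) (hw : w ∈ Fmap A B C D {0} v) :
    z + w ∈ Fmap A B C D Y (x + v) := by
  obtain ⟨u, huY, rfl⟩ := hz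
  obtain ⟨u', hu', rfl⟩ := hw
  refine ⟨u + u', ?_, ?_⟩
  · convert huY using 1
    rw [Set.mem_singleton_iff] at hu'
    rw [Matrix.mulVec_add, Matrix.mulVec_add, add_add_add_comm, hu', add_zero]
  · rw [Matrix.mulVec_add, Matrix.mulVec_add]
    abel

theorem add_mem_SIter_Fmap {Y : Set (Fin s → ℝ)} {ℓ : ℕ} {x v z w : Fin n → ℝ}
    (hz : z ∈ SIter (Fmap A B C D Y) ℓ x) (hw : w ∈ SIter (Fmap A B C D {0}) ℓ v) :
    z + w ∈ SIter (Fmap A B C D Y) ℓ (x + v) := by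
  induction ℓ generalizing z w with
  | zero =>
    rw [SIter, Set.mem_singleton_iff] at hz hw
    rw [hz, hw]
    exact Set.mem_singleton _
  | succ ℓ ih =>
    simp only [SIter, Set.mem_iUnion, exists_prop] at hz hw ⊢
    obtain ⟨y, hy, hzy⟩ := hz
    obtain ⟨y', hy', hwy'⟩ := hw
    exact ⟨y + y', ih hy hy', add_mem_Fmap A B C D hzy hwy'⟩

noncomputable def strongReachStep (S : Submodule ℝ (Fin n → ℝ)) : Submodule ℝ (Fin n → ℝ) :=
  (S.prod ⊤ ⊓ LinearMap.ker (C.mulVecLin.coprod D.mulVecLin)).map (A.mulVecLin.coprod B.mulVecLin)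

theorem mem_strongReachStep {S : Submodule ℝ (Fin n → ℝ)} {z : Fin n → ℝ} :
    z ∈ strongReachStep A B C D S ↔ ∃ v ∈ S, z ∈ Fmap A B C D {0} v := by
  simp [strongReachStep, Fmap, eq_comm, and_assoc]

theorem strongReachStep_mono : Monotone (strongReachStep A B C D) := fun _ _ h =>
  Submodule.map_mono (inf_le_inf_right _ (Submodule.prod_mono h le_rfl))

theorem SIter_Fmap_zero_eq (ℓ : ℕ) :
    SIter (Fmap A B C D {0}) ℓ 0 = ↑((strongReachStep A B C D)^[ℓ] ⊥) := by
  induction ℓ with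
  | zero => simp [SIter]
  | succ ℓ ih =>
    ext z
    simp [SIter, ih, Function.iterate_succ_apply', mem_strongReachStep]

theorem Tstar_subset_iterate_strongReachStep :
    Tstar A B C D ⊆ ↑((strongReachStep A B C D)^[n] ⊥) := by
  intro t ht
  obtain ⟨ℓ, -, htℓ⟩ := Set.mem_iUnion₂.1 ht
  rw [SIter_Fmap_zero_eq] at htℓ
  simpa using Submodule.iterate_bot_le_iterate_finrank_bot (strongReachStep_mono A B C D) ℓ htℓ

theorem SIter_succ_nonempty_of_Kset_add {Y : Set (Fin s → ℝ)} (hK : Kset A B C D + Y = Set.univ)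
    {x : Fin n → ℝ} (hx : (SIter (Fmap A B C D Y) n x).Nonempty) :
    (SIter (Fmap A B C D Y) (n + 1) x).Nonempty := by
  obtain ⟨z, hz⟩ := hx
  obtain ⟨_, ⟨u, t, ht, rfl⟩, y, hy, hsplit⟩ :=
    Set.mem_add.1 (hK.symm ▸ Set.mem_univ (C *ᵥ z))
  have hneg : -t ∈ SIter (Fmap A B C D {0}) n 0 := by
    rw [SIter_Fmap_zero_eq]
    exact neg_mem (Tstar_subset_iterate_strongReachStep A B C D ht)
  have hzt : z + -t ∈ SIter (Fmap A B C D Y) n x := by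
    simpa using add_mem_SIter_Fmap A B C D hz hneg
  refine ⟨A *ᵥ (z + -t) + B *ᵥ (-u), Set.mem_biUnion hzt ⟨-u, ?_, rfl⟩⟩
  convert hy using 1
  rw [← sub_eq_zero, Matrix.mulVec_add, Matrix.mulVec_neg, Matrix.mulVec_neg, ← hsplit]
  abel

end ConstrainedSystem

theorem stmt12_general {n m s : ℕ} (A : Matrix (Fin n) (Fin n) ℝ) (B : Matrix (Fin n) (Fin m) ℝ)
    (C : Matrix (Fin s) (Fin n) ℝ) (D : Matrix (Fin s) (Fin m) ℝ)
    (Y : Set (Fin s → ℝ))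
    (hK : Kset A B C D + Y = Set.univ) :
    XSet (Fmap A B C D Y) = {x | (SIter (Fmap A B C D Y) n x).Nonempty} :=
  XSet_eq_of_SIter_succ_nonempty _ fun _ => SIter_succ_nonempty_of_Kset_add A B C D hK

/-- If `𝒦(Σ) + 𝒴 = ℝ^s`, then `X(F) = X_n(F)`: the feasible set is finitely determined. -/
theorem stmt12 {n m s : ℕ} (A : Matrix (Fin n) (Fin n) ℝ) (B : Matrix (Fin n) (Fin m) ℝ)
    (C : Matrix (Fin s) (Fin n) ℝ) (D : Matrix (Fin s) (Fin m) ℝ)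
    (Y : Set (Fin s → ℝ)) (hY : Convex ℝ Y) (h0Y : (0 : Fin s → ℝ) ∈ Y)
    (hsolid : (interior (Y ∩ CDrange C D)).Nonempty)
    (hK : Kset A B C D + Y = Set.univ) :
    XSet (Fmap A B C D Y) = {x | (SIter (Fmap A B C D Y) n x).Nonempty} :=
  stmt12_general A B C D Y hK
end

section
/- Let F° be the dual set-valued mapping given by F°(q) = {A^T q + C^T v | v ∈ −𝒴°, B^T q + D^T v = 0} and 𝒱*(Σ^T) the weakly unobservable subspace of the dual system Σ^T = Σ(A^T, C^T, B^T, D^T). Then (F°)^{-1}(𝒱*(Σ^T)) ⊆ 𝒱*(Σ^T). -/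
open Pointwise

/-- The polar set `𝒴° = {q | ⟨q,y⟩ ≤ 1 for all y ∈ 𝒴}` (with the standard dot product). -/
def Ypolar {s : ℕ} (Y : Set (Fin s → ℝ)) : Set (Fin s → ℝ) :=
  {q | ∀ y ∈ Y, dotProduct q y ≤ 1}

/-- The dual set-valued map `F°(q) = {Aᵀq + Cᵀv | v ∈ −𝒴°, Bᵀq + Dᵀv = 0}`. -/
def Fpolar {n m s : ℕ} (A : Matrix (Fin n) (Fin n) ℝ) (B : Matrix (Fin n) (Fin m) ℝ)
    (C : Matrix (Fin s) (Fin n) ℝ) (D : Matrix (Fin s) (Fin m) ℝ)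
    (Y : Set (Fin s → ℝ)) : (Fin n → ℝ) → Set (Fin n → ℝ) :=
  fun q => {w | ∃ v : Fin s → ℝ, v ∈ -Ypolar Y ∧
    B.transpose.mulVec q + D.transpose.mulVec v = 0 ∧
    w = A.transpose.mulVec q + C.transpose.mulVec v}

theorem XSet.mem_of_successor_mem {E : Type*} {F : E → Set E} {x y : E}
    (hy : y ∈ F x) (hyX : y ∈ XSet F) : x ∈ XSet F := by
  obtain ⟨f, hf0, hf⟩ := hyX
  refine ⟨fun | 0 => x | k + 1 => f k, rfl, ?_⟩
  rintro (_ | k)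
  · simpa [hf0] using hy
  · exact hf k

theorem Fpolar_subset_Fmap_transpose {n m s : ℕ} (A : Matrix (Fin n) (Fin n) ℝ)
    (B : Matrix (Fin n) (Fin m) ℝ) (C : Matrix (Fin s) (Fin n) ℝ)
    (D : Matrix (Fin s) (Fin m) ℝ) (Y : Set (Fin s → ℝ)) (q : Fin n → ℝ) :
    Fpolar A B C D Y q ⊆ Fmap A.transpose C.transpose B.transpose D.transpose {0} q := by
  rintro w ⟨v, -, hBD, hw⟩
  exact ⟨v, hBD, hw⟩

theorem stmt15_general {n m s : ℕ} (A : Matrix (Fin n) (Fin n) ℝ) (B : Matrix (Fin n) (Fin m) ℝ)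
    (C : Matrix (Fin s) (Fin n) ℝ) (D : Matrix (Fin s) (Fin m) ℝ)
    (Y : Set (Fin s → ℝ)) :
    {q : Fin n → ℝ |
        (Fpolar A B C D Y q ∩ Vstar A.transpose C.transpose B.transpose D.transpose).Nonempty}
      ⊆ Vstar A.transpose C.transpose B.transpose D.transpose := by
  rintro q ⟨w, hw, hwV⟩
  exact XSet.mem_of_successor_mem (Fpolar_subset_Fmap_transpose A B C D Y q hw) hwV

/-- `(F°)^{-1}(𝒱*(Σᵀ)) ⊆ 𝒱*(Σᵀ)`. -/
theorem stmt15 {n m s : ℕ} (A : Matrix (Fin n) (Fin n) ℝ) (B : Matrix (Fin n) (Fin m) ℝ)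
    (C : Matrix (Fin s) (Fin n) ℝ) (D : Matrix (Fin s) (Fin m) ℝ)
    (Y : Set (Fin s → ℝ)) (hY : Convex ℝ Y) (h0Y : (0 : Fin s → ℝ) ∈ Y) :
    {q : Fin n → ℝ |
        (Fpolar A B C D Y q ∩ Vstar A.transpose C.transpose B.transpose D.transpose).Nonempty}
      ⊆ Vstar A.transpose C.transpose B.transpose D.transpose :=
  stmt15_general A B C D Y
end

section
/- Let H: ℝ^n ⇉ ℝ^n be a convex process and suppose there exists a subspace 𝒲 ⊆ H^ℓ(0) for some ℓ ≥ 0 satisfying 𝒲 ⊆ H(𝒲) and 𝒲 + dom(H) = ℝ^n. If H is reachable (X(H) ⊆ R(H)), then R(H) = ℝ^n. -/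
open Pointwise

section Aux

variable {E : Type*} [AddCommGroup E] [Module ℝ E] {H : E → Set E}

theorem siter_succ {m : ℕ} {x y : E} :
    y ∈ SIter H (m + 1) x ↔ ∃ z ∈ SIter H m x, y ∈ H z := by
  simp [SIter]

theorem graph_add (hconv : Convex ℝ {p : E × E | p.2 ∈ H p.1})
    (hcone : ∀ c : ℝ, 0 ≤ c → ∀ x y, y ∈ H x → c • y ∈ H (c • x))
    {x₁ y₁ x₂ y₂ : E} (h1 : y₁ ∈ H x₁) (h2 : y₂ ∈ H x₂) :
    y₁ + y₂ ∈ H (x₁ + x₂) := by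
  have hmid : ((1/2 : ℝ) • x₁ + (1/2 : ℝ) • x₂, (1/2 : ℝ) • y₁ + (1/2 : ℝ) • y₂)
      ∈ {p : E × E | p.2 ∈ H p.1} := by
    have := hconv (x := (x₁, y₁)) (y := (x₂, y₂)) h1 h2
      (by norm_num : (0:ℝ) ≤ 1/2) (by norm_num : (0:ℝ) ≤ 1/2) (by norm_num)
    exact this
  have h2' := hcone 2 (by norm_num) _ _ hmid
  have e1 : (2 : ℝ) • ((1/2 : ℝ) • y₁ + (1/2 : ℝ) • y₂) = y₁ + y₂ := by module
  have e2 : (2 : ℝ) • ((1/2 : ℝ) • x₁ + (1/2 : ℝ) • x₂) = x₁ + x₂ := by module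
  rwa [e1, e2] at h2'

theorem graph_sum (hconv : Convex ℝ {p : E × E | p.2 ∈ H p.1})
    (hcone : ∀ c : ℝ, 0 ≤ c → ∀ x y, y ∈ H x → c • y ∈ H (c • x))
    (h00 : (0 : E) ∈ H 0) {ι : Type*} (s : Finset ι) (f g : ι → E)
    (h : ∀ i ∈ s, g i ∈ H (f i)) :
    (∑ i ∈ s, g i) ∈ H (∑ i ∈ s, f i) := by
  classical
  induction s using Finset.induction with
  | empty => simpa using h00
  | insert _ _ hx ih =>
      rw [Finset.sum_insert hx, Finset.sum_insert hx]
      exact graph_add hconv hcone (h _ (Finset.mem_insert_self _ _))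
        (ih fun i hi => h i (Finset.mem_insert_of_mem hi))

theorem siter_zero (h00 : (0 : E) ∈ H 0) : ∀ m, (0 : E) ∈ SIter H m 0 := by
  intro m
  induction m with
  | zero => exact rfl
  | succ m ih => exact siter_succ.mpr ⟨0, ih, h00⟩

theorem siter_mono (h00 : (0 : E) ∈ H 0) {m m' : ℕ} (h : m ≤ m') :
    SIter H m 0 ⊆ SIter H m' 0 := by
  have step : ∀ k, SIter H k (0 : E) ⊆ SIter H (k + 1) 0 := by
    intro k
    induction k with
    | zero => intro y hy; rcases hy with rfl; exact siter_succ.mpr ⟨0, rfl, h00⟩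
    | succ k ih =>
        intro y hy
        rcases siter_succ.mp hy with ⟨z, hz, hyz⟩
        exact siter_succ.mpr ⟨z, ih hz, hyz⟩
  induction h with
  | refl => exact subset_rfl
  | step h ih => exact ih.trans (step _)

theorem siter_addmem (hconv : Convex ℝ {p : E × E | p.2 ∈ H p.1})
    (hcone : ∀ c : ℝ, 0 ≤ c → ∀ x y, y ∈ H x → c • y ∈ H (c • x)) :
    ∀ m (a b : E), a ∈ SIter H m 0 → b ∈ SIter H m 0 → a + b ∈ SIter H m 0 := by
  intro m
  induction m with
  | zero =>
      intro a b ha hb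
      obtain rfl : a = 0 := ha
      obtain rfl : b = 0 := hb
      simp [SIter]
  | succ m ih =>
      intro a b ha hb
      rcases siter_succ.mp ha with ⟨za, hza, haz⟩
      rcases siter_succ.mp hb with ⟨zb, hzb, hbz⟩
      exact siter_succ.mpr ⟨za + zb, ih _ _ hza hzb, graph_add hconv hcone haz hbz⟩

theorem siter_path : ∀ (m : ℕ) (x y : E), y ∈ SIter H m x →
    ∃ f : ℕ → E, f 0 = x ∧ f m = y ∧ ∀ j < m, f (j + 1) ∈ H (f j) := by
  intro m
  induction m with
  | zero =>
      intro x y hy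
      obtain rfl : y = x := hy
      exact ⟨fun _ => y, rfl, rfl, fun j hj => absurd hj (by omega)⟩
  | succ m ih =>
      intro x y hy
      rcases siter_succ.mp hy with ⟨z, hz, hyz⟩
      rcases ih x z hz with ⟨f, hf0, hfm, hfs⟩
      refine ⟨fun j => if j = m + 1 then y else f j, by simp [hf0], by simp, ?_⟩
      intro j hj
      by_cases hjm : j = m
      · subst hjm
        simp only [if_pos rfl, if_neg (by omega : ¬ j = j + 1)]
        rwa [hfm]
      · simp only [if_neg (by omega : ¬ j + 1 = m + 1), if_neg (by omega : ¬ j = m + 1)]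
        exact hfs j (by omega)

end Aux

/-- Let `H : ℝ^n ⇉ ℝ^n` be a convex process admitting a subspace `𝒲 ⊆ H^ℓ(0)` with
`𝒲 ⊆ H(𝒲)` and `𝒲 + dom H = ℝ^n`. If `H` is reachable, then `R(H) = ℝ^n`. -/
theorem stmt17 {n : ℕ} (H : (Fin n → ℝ) → Set (Fin n → ℝ))
    (hconv : Convex ℝ {p : (Fin n → ℝ) × (Fin n → ℝ) | p.2 ∈ H p.1})
    (hcone : ∀ c : ℝ, 0 ≤ c → ∀ x y, y ∈ H x → c • y ∈ H (c • x))
    (h00 : (0 : Fin n → ℝ) ∈ H 0)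
    (W : Submodule ℝ (Fin n → ℝ)) (ℓ : ℕ)
    (hW1 : (W : Set (Fin n → ℝ)) ⊆ SIter H ℓ 0)
    (hW2 : (W : Set (Fin n → ℝ)) ⊆ ⋃ x ∈ (W : Set (Fin n → ℝ)), H x)
    (hW3 : (W : Set (Fin n → ℝ)) + {x | (H x).Nonempty} = Set.univ)
    (hreach : XSet H ⊆ RSet H) :
    RSet H = Set.univ := by
  classical
  obtain ⟨L, hL1, hlL⟩ : ∃ L, 1 ≤ L ∧ ℓ ≤ L := ⟨max ℓ 1, le_max_right _ _, le_max_left _ _⟩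
  have hWL : (W : Set (Fin n → ℝ)) ⊆ SIter H L 0 :=
    hW1.trans (siter_mono h00 hlL)
  have hWR : (W : Set (Fin n → ℝ)) ⊆ RSet H := by
    intro w hw
    exact Set.mem_iUnion₂.mpr ⟨L, hL1, hWL hw⟩
  have hRadd : ∀ a b : Fin n → ℝ, a ∈ RSet H → b ∈ RSet H → a + b ∈ RSet H := by
    intro a b ha hb
    rcases Set.mem_iUnion₂.mp ha with ⟨ma, hma, haa⟩
    rcases Set.mem_iUnion₂.mp hb with ⟨mb, hmb, hbb⟩
    refine Set.mem_iUnion₂.mpr ⟨max ma mb, (le_trans (hma : 1 ≤ ma) (le_max_left _ _) : 1 ≤ max ma mb), ?_⟩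
    exact siter_addmem hconv hcone _ _ _
      (siter_mono h00 (le_max_left _ _) haa) (siter_mono h00 (le_max_right _ _) hbb)
  -- decomposition of any point
  have hdom : ∀ x : Fin n → ℝ, ∃ w ∈ W, ∃ d, (H d).Nonempty ∧ w + d = x := by
    intro x
    have hx : x ∈ (W : Set (Fin n → ℝ)) + {x | (H x).Nonempty} := by
      rw [hW3]; exact Set.mem_univ x
    rcases Set.mem_add.mp hx with ⟨w, hw, d, hd, hwd⟩
    exact ⟨w, hw, d, hd, hwd⟩
  -- backward selection in W
  have hback : ∀ v : Fin n → ℝ, v ∈ W → ∃ u, u ∈ W ∧ v ∈ H u := by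
    intro v hv
    rcases Set.mem_iUnion₂.mp (hW2 hv) with ⟨u, hu, hmem⟩
    exact ⟨u, hu, hmem⟩
  choose g hgW hgH using hback
  -- viability modulo W
  have hviab : ∀ d : Fin n → ℝ, (H d).Nonempty →
      ∃ u, u ∈ W ∧ ∃ d', (H d').Nonempty ∧ d' ∈ H (d + u) := by
    intro d hd
    rcases hd with ⟨y, hy⟩
    rcases hdom y with ⟨w, hw, e, he, hwe⟩
    refine ⟨g (-w) (neg_mem hw), hgW _ _, e, he, ?_⟩
    have hnw : (-w : Fin n → ℝ) ∈ H (g (-w) (neg_mem hw)) := hgH _ _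
    have := graph_add hconv hcone hy hnw
    have hye : y + -w = e := by
      have := hwe; linear_combination (norm := module) this.symm
    rwa [hye] at this
  choose uf hufW df hdfdom hdfmem using hviab
  -- delivery trajectories
  have hdeliv : ∀ w : Fin n → ℝ, w ∈ W → ∀ k : ℕ, ∃ p : ℕ → (Fin n → ℝ),
      p k = w ∧ p 0 ∈ W ∧ (∀ j, j + L ≤ k → p j = 0) ∧
      (∀ j, j < k → p (j + 1) ∈ H (p j)) := by
    intro w hw k
    by_cases hk : L ≤ k
    · rcases siter_path L 0 w (hWL hw) with ⟨q, hq0, hqL, hqs⟩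
      refine ⟨fun j => q (j - (k - L)), ?_, ?_, ?_, ?_⟩
      · show q (k - (k - L)) = w
        rw [show k - (k - L) = L by omega, hqL]
      · show q (0 - (k - L)) ∈ W
        rw [show 0 - (k - L) = 0 by omega, hq0]; exact zero_mem W
      · intro j hj
        show q (j - (k - L)) = 0
        rw [show j - (k - L) = 0 by omega, hq0]
      · intro j hj
        show q (j + 1 - (k - L)) ∈ H (q (j - (k - L)))
        by_cases hjk : j + 1 ≤ k - L
        · rw [show j + 1 - (k - L) = 0 by omega, show j - (k - L) = 0 by omega, hq0]
          exact h00
        · rw [show j + 1 - (k - L) = (j - (k - L)) + 1 by omega]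
          exact hqs _ (by omega)
    · -- backward chain inside W
      let c : ℕ → {v : Fin n → ℝ // v ∈ W} := fun i =>
        Nat.rec ⟨w, hw⟩ (fun _ q => ⟨g q.1 q.2, hgW _ _⟩) i
      have hc : ∀ i, (c i).1 ∈ H ((c (i + 1)).1) := fun i => hgH _ _
      refine ⟨fun j => (c (k - j)).1, ?_, (c k).2, ?_, ?_⟩
      · show (c (k - k)).1 = w
        rw [Nat.sub_self]
        rfl
      · intro j hj; omega
      · intro j hj
        show (c (k - (j + 1))).1 ∈ H ((c (k - j)).1)
        have h2 : ((k - j) - 1) + 1 = k - j := by omega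
        rw [show k - (j + 1) = (k - j) - 1 by omega]
        have := hc ((k - j) - 1)
        rwa [h2] at this
  choose P hPk hP0 hPwin hPstep using hdeliv
  -- main construction
  rw [Set.eq_univ_iff_forall]
  intro x
  rcases hdom x with ⟨w₀, hw₀, d₀, hd₀, hxd⟩
  let Dp : ℕ → {d : Fin n → ℝ // (H d).Nonempty} := fun k =>
    Nat.rec ⟨d₀, hd₀⟩ (fun _ q => ⟨df q.1 q.2, hdfdom q.1 q.2⟩) k
  let D : ℕ → (Fin n → ℝ) := fun k => (Dp k).1
  let U : ℕ → (Fin n → ℝ) := fun k => uf (Dp k).1 (Dp k).2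
  have hUW : ∀ k, U k ∈ W := fun k => hufW _ _
  have hDstep : ∀ k, D (k + 1) ∈ H (D k + U k) := fun k => hdfmem _ _
  let p : ℕ → ℕ → (Fin n → ℝ) := fun k => P (U k) (hUW k) k
  let X : ℕ → (Fin n → ℝ) := fun j => D j + ∑ k ∈ Finset.Icc j (j + L), p k j
  have hXstep : ∀ j, X (j + 1) ∈ H (X j) := by
    intro j
    have h1 : D (j + 1) ∈ H (D j + p j j) := by
      have : p j j = U j := hPk _ _ _
      rw [this]; exact hDstep j
    have h2 : (∑ k ∈ Finset.Icc (j + 1) (j + L), p k (j + 1))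
        ∈ H (∑ k ∈ Finset.Icc (j + 1) (j + L), p k j) := by
      refine graph_sum hconv hcone h00 _ _ _ ?_
      intro k hk
      rcases Finset.mem_Icc.mp hk with ⟨hk1, hk2⟩
      exact hPstep _ _ _ _ (by omega)
    have key := graph_add hconv hcone h1 h2
    have eX : X j = (D j + p j j) + ∑ k ∈ Finset.Icc (j + 1) (j + L), p k j := by
      show D j + ∑ k ∈ Finset.Icc j (j + L), p k j = _
      have hins : Finset.Icc j (j + L) = insert j (Finset.Icc (j + 1) (j + L)) := by
        ext a; simp only [Finset.mem_Icc, Finset.mem_insert]; omega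
      rw [hins, Finset.sum_insert (by simp [Finset.mem_Icc])]
      abel
    have eX' : X (j + 1) = D (j + 1) + ∑ k ∈ Finset.Icc (j + 1) (j + L), p k (j + 1) := by
      show D (j + 1) + ∑ k ∈ Finset.Icc (j + 1) (j + 1 + L), p k (j + 1) = _
      have htop : j + 1 + L = (j + L) + 1 := by omega
      rw [htop, Finset.sum_Icc_succ_top (by omega)]
      have hz : p (j + L + 1) (j + 1) = 0 :=
        hPwin (U (j + L + 1)) (hUW (j + L + 1)) (j + L + 1) (j + 1) (by omega)
      rw [hz]
      abel
    rw [eX, eX']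
    exact key
  have hX0 : X 0 ∈ XSet H := ⟨X, rfl, hXstep⟩
  have hS : (∑ k ∈ Finset.Icc 0 (0 + L), p k 0) ∈ W := by
    refine Submodule.sum_mem W ?_
    intro k hk
    exact hP0 (U k) (hUW k) k
  have hx0R : X 0 ∈ RSet H := hreach hX0
  have hwR : w₀ - (∑ k ∈ Finset.Icc 0 (0 + L), p k 0) ∈ RSet H :=
    hWR (sub_mem hw₀ hS)
  have hxeq : x = (w₀ - (∑ k ∈ Finset.Icc 0 (0 + L), p k 0)) + X 0 := by
    show x = _ + (D 0 + ∑ k ∈ Finset.Icc 0 (0 + L), p k 0)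
    have hD0 : D 0 = d₀ := rfl
    rw [hD0, ← hxd]
    abel
  rw [hxeq]
  exact hRadd _ _ hwR hx0R
end
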